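/- Let q = 2h+2 with h ≥ 1 an integer, λ_q = 2 cos(π/q), I_q = [−λ_q/2, λ_q/2], f_q the Hurwitz–Nakada map and θ_n(x) = −1/(x + n λ_q). Put φ_i = θ_1^{∘(h−i)}(0) for 0 ≤ i ≤ h (so φ_0 = −λ_q/2 < φ_1 < ⋯ < φ_h = 0) and Φ_i = [φ_{i−1}, φ_i] for 1 ≤ i ≤ h. Then for every 1 ≤ i ≤ h and every x in the open interval (φ_{i−1}, φ_i): (a) θ_n(x) ∈ (φ_{h−1}, 0) for every n ≥ 2; (b) θ_n(x) ∈ (0, −φ_{h−1}) for every n ≤ −1; (c) if i ≥ 2 then θ_1(x) ∈ (φ_{i−2}, φ_{i−1}); (d) if i = 1 then θ_1(x) < −λ_q/2, so θ_1(x) ∉ I_q; (e) the preimage set {y ∈ I_q∖{0} : f_q(y) = x} equals {θ_n(x) : n ∈ ℤ∖{0}} if i ≥ 2, and equals {θ_n(x) : n ≥ 2 or n ≤ −1} if i = 1. -/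

import Mathlib

/-- `λ_q = 2 cos (π / q)`. -/
noncomputable def lam (q : ℕ) : ℝ := 2 * Real.cos (Real.pi / (q : ℝ))

/-- The modified floor `⌊t⌋′`: the unique integer `n` with `n < t ≤ n+1` if
`t > 0`, and `n ≤ t < n+1` if `t ≤ 0`. -/
noncomputable def mfloor (t : ℝ) : ℤ := if 0 < t then ⌈t⌉ - 1 else ⌊t⌋

/-- The nearest-`λ_q`-multiple function `⟨x⟩ = ⌊x/λ_q + 1/2⌋′`. -/
noncomputable def nearLam (q : ℕ) (x : ℝ) : ℤ := mfloor (x / lam q + 1 / 2)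

/-- The Hurwitz–Nakada map `f_q(x) = -1/x - ⟨-1/x⟩·λ_q`, `f_q(0) = 0`. -/
noncomputable def fq (q : ℕ) (x : ℝ) : ℝ :=
  if x = 0 then 0 else -1 / x - (nearLam q (-1 / x) : ℝ) * lam q

/-!
For `q = 2h + 2` the orbit of `0` under `θ_1` is explicit:
`θ_1^k(0) = -sin(kπ/q) / sin((k+1)π/q)`, so every `φ_i` lies in `[-λ_q/2, 0]`,
`φ_h = 0`, `φ_{h-1} = -1/λ_q` (whence `1/λ_q ≤ λ_q/2`) and `φ_0 = -λ_q/2`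
(because `(h+1)π/q = π/2`).
Since `θ_1` is increasing it maps `Φ_i` onto `Φ_{i-1}`, and `Φ_1` to the left of `I_q`,
which gives (c) and (d); (a) and (b) are direct estimates of `x + nλ_q`.
For `|x| < λ_q/2` we have `⟨x + nλ_q⟩ = n`, so `f_q(θ_n(x)) = x` for all `n ≠ 0`, and
conversely `f_q(y) = x` forces `y = θ_n(x)` with `n = ⟨-1/y⟩`, where `n = 0` would give
`|y| = 1/|x| > 2/λ_q ≥ λ_q/2`. Thus the preimages of `x` in `I_q` are exactly the
`θ_n(x)`, `n ≠ 0`, that lie in `I_q`, and (a)–(d) decide which ones do.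
-/

open Real Set

noncomputable def theta (q : ℕ) (n : ℤ) (x : ℝ) : ℝ := -1 / (x + n * lam q)

noncomputable def phi (q h i : ℕ) : ℝ := (theta q 1)^[h - i] 0

lemma lam_pos {q : ℕ} (hq : 2 < q) : 0 < lam q := by
  have hq' : (2 : ℝ) < q := by exact_mod_cast hq
  have hlt : π / q < π / 2 := div_lt_div_of_pos_left pi_pos two_pos hq'
  have hpos : 0 < π / q := div_pos pi_pos (by linarith)
  have := cos_pos_of_mem_Ioo ⟨by linarith, hlt⟩
  unfold lam
  positivity

lemma lam_le_two (q : ℕ) : lam q ≤ 2 := by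
  unfold lam
  linarith [cos_le_one (π / q)]

lemma sin_nat_mul_pi_div_nonneg {q k : ℕ} (hk : k ≤ q) : 0 ≤ sin (k * (π / q)) := by
  rcases Nat.eq_zero_or_pos q with rfl | hq
  · simp
  have hq' : (0 : ℝ) < q := by exact_mod_cast hq
  refine sin_nonneg_of_nonneg_of_le_pi (by positivity) ?_
  rw [mul_div_assoc', div_le_iff₀ hq']
  exact mul_comm π q ▸ mul_le_mul_of_nonneg_right (by exact_mod_cast hk) pi_pos.le

lemma sin_nat_mul_pi_div_pos {q k : ℕ} (hk0 : 0 < k) (hk : k < q) : 0 < sin (k * (π / q)) := by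
  have hq' : (0 : ℝ) < q := by exact_mod_cast hk0.trans hk
  refine sin_pos_of_pos_of_lt_pi (by positivity) ?_
  rw [mul_div_assoc', div_lt_iff₀ hq']
  exact mul_comm π q ▸ mul_lt_mul_of_pos_right (by exact_mod_cast hk) pi_pos

lemma lam_mul_sin (q : ℕ) (x : ℝ) : lam q * sin x = sin (x - π / q) + sin (x + π / q) := by
  rw [sin_sub, sin_add, lam]
  ring

lemma theta_one_eq (q : ℕ) : theta q 1 = fun x => -1 / (x + lam q) := by
  funext x
  simp [theta]

lemma theta_strictMonoOn (q : ℕ) (n : ℤ) : StrictMonoOn (theta q n) (Ioi (-(n * lam q))) := by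
  intro a ha b _ hab
  have ha' : 0 < a + n * lam q := by rw [mem_Ioi] at ha; linarith
  simp only [theta, neg_div, neg_lt_neg_iff]
  exact one_div_lt_one_div_of_lt ha' (by linarith)

lemma iterate_theta_one_zero {q k : ℕ} (hk : k < q) :
    (theta q 1)^[k] 0 = -sin (k * (π / q)) / sin ((k + 1) * (π / q)) := by
  induction k with
  | zero => simp
  | succ k ih =>
    have hs : sin ((k + 1) * (π / q)) ≠ 0 := by
      exact_mod_cast (sin_nat_mul_pi_div_pos k.succ_pos hk).ne'
    have hrec : lam q * sin ((k + 1) * (π / q))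
        = sin (k * (π / q)) + sin ((k + 1 + 1) * (π / q)) := by
      rw [lam_mul_sin]
      ring_nf
    have hden : -sin (k * (π / q)) / sin ((k + 1) * (π / q)) + lam q
        = sin ((k + 1 + 1) * (π / q)) / sin ((k + 1) * (π / q)) := by
      rw [eq_div_iff hs, add_mul, div_mul_cancel₀ _ hs]
      linarith
    rw [Function.iterate_succ_apply', ih (by omega), theta_one_eq]
    push_cast
    rw [hden, div_div_eq_mul_div]
    ring

lemma iterate_theta_one_zero_nonpos {q k : ℕ} (hk : k < q) : (theta q 1)^[k] 0 ≤ 0 := by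
  have hk1 : 0 ≤ sin ((k + 1) * (π / q)) := by
    exact_mod_cast sin_nat_mul_pi_div_nonneg (k := k + 1) hk
  rw [iterate_theta_one_zero hk, neg_div]
  exact neg_nonpos.mpr (div_nonneg (sin_nat_mul_pi_div_nonneg hk.le) hk1)

lemma neg_lam_div_two_le_iterate_theta_one_zero {q k : ℕ} (hk : 2 * (k + 1) ≤ q) :
    -lam q / 2 ≤ (theta q 1)^[k] 0 := by
  have hq : (0 : ℝ) < q := by exact_mod_cast (by omega : 0 < q)
  have hs : 0 < sin ((k + 1) * (π / q)) := by
    exact_mod_cast sin_nat_mul_pi_div_pos k.succ_pos (by omega)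
  have hsin : 0 ≤ sin (π / q) := by
    simpa using sin_nat_mul_pi_div_nonneg (q := q) (k := 1) (by omega)
  have hcos : 0 ≤ cos ((k + 1) * (π / q)) := by
    have : (0 : ℝ) ≤ (k + 1) * (π / q) := by positivity
    refine cos_nonneg_of_mem_Icc ⟨by linarith [pi_pos], ?_⟩
    rw [mul_div_assoc', div_le_div_iff₀ hq two_pos]
    nlinarith [pi_pos, (by exact_mod_cast hk : 2 * ((k : ℝ) + 1) ≤ q)]
  have hrec := lam_mul_sin q ((k + 1) * (π / q))
  have hdiff : sin ((k + 1) * (π / q) + π / q) - sin ((k + 1) * (π / q) - π / q)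
      = 2 * sin (π / q) * cos ((k + 1) * (π / q)) := by
    rw [sin_add, sin_sub]
    ring
  rw [iterate_theta_one_zero (by omega), neg_div, neg_div, neg_le_neg_iff, div_le_iff₀ hs,
    show (k : ℝ) * (π / q) = (k + 1) * (π / q) - π / q by ring]
  nlinarith [mul_nonneg hsin hcos]

lemma theta_mem_Ioo_of_two_le {q : ℕ} (hq : 2 < q) {x : ℝ} (hx : -lam q / 2 < x) {n : ℤ}
    (hn : 2 ≤ n) : theta q n x ∈ Ioo (-1 / lam q) 0 := by
  have hl := lam_pos hq
  have hn' : (2 : ℝ) ≤ n := by exact_mod_cast hn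
  have hbig : lam q < x + n * lam q := by nlinarith
  simp only [theta, neg_div, mem_Ioo, neg_lt_neg_iff, neg_lt_zero]
  exact ⟨one_div_lt_one_div_of_lt hl hbig, one_div_pos.mpr (hl.trans hbig)⟩

lemma theta_mem_Ioo_of_le_neg_one {q : ℕ} (hq : 2 < q) {x : ℝ} (hx : x < 0) {n : ℤ}
    (hn : n ≤ -1) : theta q n x ∈ Ioo 0 (1 / lam q) := by
  have hl := lam_pos hq
  have hn' : (n : ℝ) ≤ -1 := by exact_mod_cast hn
  have hbig : lam q < -(x + n * lam q) := by nlinarith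
  rw [theta, neg_div, ← div_neg]
  exact ⟨one_div_pos.mpr (hl.trans hbig), one_div_lt_one_div_of_lt hl hbig⟩

section Phi

variable {h q : ℕ}

lemma phi_mem_Icc (hq : q = 2 * h + 2) (i : ℕ) : phi q h i ∈ Icc (-lam q / 2) 0 :=
  ⟨neg_lam_div_two_le_iterate_theta_one_zero (k := h - i) (by omega),
    iterate_theta_one_zero_nonpos (k := h - i) (by omega)⟩

lemma Ioo_phi_subset (hq : q = 2 * h + 2) (j k : ℕ) :
    Ioo (phi q h j) (phi q h k) ⊆ Ioo (-lam q / 2) 0 :=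
  fun _ hx => ⟨(phi_mem_Icc hq j).1.trans_lt hx.1, hx.2.trans_le (phi_mem_Icc hq k).2⟩

lemma phi_zero (hq : q = 2 * h + 2) : phi q h 0 = -lam q / 2 := by
  have hright : ((h : ℝ) + 1) * (π / q) = π / 2 := by
    rw [hq]
    push_cast
    field_simp
  have hleft : (h : ℝ) * (π / q) = π / 2 - π / q := by linarith
  rw [phi, Nat.sub_zero, iterate_theta_one_zero (by omega), hright, hleft, sin_pi_div_two,
    sin_pi_div_two_sub, lam]
  ring

lemma phi_sub_one (hh : 1 ≤ h) : phi q h (h - 1) = -1 / lam q := by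
  rw [phi, show h - (h - 1) = 1 by omega, Function.iterate_one, theta]
  simp

lemma theta_one_phi {i : ℕ} (hi : 1 ≤ i) (hih : i ≤ h) :
    theta q 1 (phi q h i) = phi q h (i - 1) := by
  rw [phi, phi, show h - (i - 1) = h - i + 1 by omega, Function.iterate_succ_apply']

lemma theta_one_mem_Ioo (hh : 1 ≤ h) (hq : q = 2 * h + 2) {i : ℕ} {x : ℝ}
    (hx : x ∈ Ioo (phi q h (i - 1)) (phi q h i)) :
    theta q 1 x ∈ Ioo (theta q 1 (phi q h (i - 1))) (theta q 1 (phi q h i)) := by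
  have hl := lam_pos (by omega : 2 < q)
  have hdom : ∀ y, -lam q / 2 ≤ y → y ∈ Ioi (-((1 : ℤ) * lam q)) := fun y hy => by
    simp only [mem_Ioi, Int.cast_one, one_mul]
    linarith
  have hx' := Ioo_phi_subset hq _ _ hx
  exact ⟨theta_strictMonoOn q 1 (hdom _ (phi_mem_Icc hq _).1) (hdom _ hx'.1.le) hx.1,
    theta_strictMonoOn q 1 (hdom _ hx'.1.le) (hdom _ (phi_mem_Icc hq _).1) hx.2⟩

lemma theta_one_mem_Ioo_of_two_le (hq : q = 2 * h + 2) {i : ℕ} (hi : 2 ≤ i) (hih : i ≤ h)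
    {x : ℝ} (hx : x ∈ Ioo (phi q h (i - 1)) (phi q h i)) :
    theta q 1 x ∈ Ioo (phi q h (i - 2)) (phi q h (i - 1)) := by
  have h1 := theta_one_mem_Ioo (by omega) hq hx
  rwa [theta_one_phi (by omega : 1 ≤ i - 1) (by omega : i - 1 ≤ h),
    theta_one_phi (by omega : 1 ≤ i) hih, show i - 1 - 1 = i - 2 by omega] at h1

lemma theta_one_lt_neg_lam_div_two (hh : 1 ≤ h) (hq : q = 2 * h + 2) {x : ℝ}
    (hx : x ∈ Ioo (phi q h 0) (phi q h 1)) : theta q 1 x < -lam q / 2 := by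
  simpa only [theta_one_phi le_rfl hh, phi_zero hq] using (theta_one_mem_Ioo (i := 1) hh hq hx).2

lemma theta_mem_Icc_of_ne_one (hh : 1 ≤ h) (hq : q = 2 * h + 2) {x : ℝ}
    (hx : x ∈ Ioo (-lam q / 2) 0) {n : ℤ} (hn0 : n ≠ 0) (hn1 : n ≠ 1) :
    theta q n x ∈ Icc (-lam q / 2) (lam q / 2) := by
  have hq2 : 2 < q := by omega
  have hinv : -lam q / 2 ≤ -1 / lam q := phi_sub_one hh ▸ (phi_mem_Icc hq (h - 1)).1
  rcases le_or_gt n 0 with hn | hn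
  · obtain ⟨hpos, hlt⟩ := theta_mem_Ioo_of_le_neg_one hq2 hx.2 (by omega : n ≤ -1)
    constructor <;> linarith [neg_div (lam q) 1]
  · obtain ⟨hgt, hneg⟩ := theta_mem_Ioo_of_two_le hq2 hx.1 (by omega : 2 ≤ n)
    constructor <;> linarith [lam_pos hq2]

lemma theta_mem_Icc_iff (hh : 1 ≤ h) (hq : q = 2 * h + 2) {i : ℕ} (hi : 1 ≤ i) (hih : i ≤ h)
    {x : ℝ} (hx : x ∈ Ioo (phi q h (i - 1)) (phi q h i)) {n : ℤ} (hn0 : n ≠ 0) :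
    theta q n x ∈ Icc (-lam q / 2) (lam q / 2) ↔ (n = 1 → 2 ≤ i) := by
  have hsub : Ioo (-lam q / 2) 0 ⊆ Icc (-lam q / 2) (lam q / 2) :=
    Ioo_subset_Icc_self.trans (Icc_subset_Icc_right (by linarith [lam_pos (by omega : 2 < q)]))
  rcases eq_or_ne n 1 with rfl | hn1
  · rcases eq_or_lt_of_le hi with rfl | hi2
    · exact iff_of_false (fun hI => (theta_one_lt_neg_lam_div_two hh hq hx).not_ge hI.1)
        (by omega)
    · exact iff_of_true
        (hsub (Ioo_phi_subset hq _ _ (theta_one_mem_Ioo_of_two_le hq hi2 hih hx))) fun _ => hi2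
  · exact iff_of_true (theta_mem_Icc_of_ne_one hh hq (Ioo_phi_subset hq _ _ hx) hn0 hn1)
      fun h1 => absurd h1 hn1

end Phi

lemma mfloor_add_intCast {t : ℝ} (ht : t ∈ Ioo 0 1) (n : ℤ) : mfloor (t + n) = n := by
  obtain ⟨ht0, ht1⟩ := ht
  unfold mfloor
  rcases le_or_gt 0 n with hn | hn
  · have hc : ⌈t⌉ = 1 := Int.ceil_eq_iff.mpr ⟨by norm_num [ht0], by norm_num [ht1.le]⟩
    have : (0 : ℝ) ≤ n := by exact_mod_cast hn
    rw [if_pos (by linarith), Int.ceil_add_intCast, hc]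
    ring
  · have : (n : ℝ) ≤ -1 := by exact_mod_cast (by omega : n ≤ -1)
    rw [if_neg (by linarith), Int.floor_add_intCast, Int.floor_eq_zero_iff.mpr ⟨ht0.le, ht1⟩,
      zero_add]

lemma add_intCast_mul_lam_ne_zero {q : ℕ} (hq : 2 < q) {x : ℝ}
    (hx : x ∈ Ioo (-lam q / 2) (lam q / 2)) {n : ℤ} (hn : n ≠ 0) : x + n * lam q ≠ 0 := by
  have hl := lam_pos hq
  obtain ⟨hx1, hx2⟩ := hx
  rcases le_or_gt n 0 with hn' | hn'
  · have : (n : ℝ) ≤ -1 := by exact_mod_cast (by omega : n ≤ -1)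
    nlinarith
  · have : (1 : ℝ) ≤ n := by exact_mod_cast (by omega : 1 ≤ n)
    nlinarith

lemma theta_ne_zero {q : ℕ} (hq : 2 < q) {x : ℝ} (hx : x ∈ Ioo (-lam q / 2) (lam q / 2))
    {n : ℤ} (hn : n ≠ 0) : theta q n x ≠ 0 :=
  div_ne_zero (by norm_num) (add_intCast_mul_lam_ne_zero hq hx hn)

lemma nearLam_add_intCast_mul {q : ℕ} (hq : 2 < q) {x : ℝ}
    (hx : x ∈ Ioo (-lam q / 2) (lam q / 2)) (n : ℤ) : nearLam q (x + n * lam q) = n := by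
  have hl := lam_pos hq
  have ht : (x + lam q / 2) / lam q ∈ Ioo 0 1 :=
    ⟨div_pos (by linarith [hx.1]) hl, (div_lt_one hl).mpr (by linarith [hx.2])⟩
  rw [nearLam, show (x + n * lam q) / lam q + 1 / 2 = (x + lam q / 2) / lam q + n by
    field_simp
    ring]
  exact mfloor_add_intCast ht n

lemma fq_theta {q : ℕ} (hq : 2 < q) {x : ℝ} (hx : x ∈ Ioo (-lam q / 2) (lam q / 2))
    {n : ℤ} (hn : n ≠ 0) : fq q (theta q n x) = x := by
  have hne := add_intCast_mul_lam_ne_zero hq hx hn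
  have hinv : -1 / theta q n x = x + n * lam q := by
    rw [theta]
    field_simp
  rw [fq, if_neg (theta_ne_zero hq hx hn), hinv, nearLam_add_intCast_mul hq hx]
  ring

lemma exists_eq_theta_of_fq_eq {q : ℕ} {x : ℝ}
    (hx : x ∈ Ioo (-lam q / 2) (lam q / 2)) {y : ℝ} (hy : y ∈ Icc (-lam q / 2) (lam q / 2))
    (hy0 : y ≠ 0) (hfy : fq q y = x) : ∃ n : ℤ, n ≠ 0 ∧ y = theta q n x := by
  rw [fq, if_neg hy0] at hfy
  have hinv : -1 / y = x + nearLam q (-1 / y) * lam q := by linarith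
  refine ⟨nearLam q (-1 / y), fun hn0 => ?_, ?_⟩
  · rw [hn0, Int.cast_zero, zero_mul, add_zero] at hinv
    have hxy : x * y = -1 := by
      field_simp at hinv
      linarith
    have hl2 := lam_le_two q
    have hx1 : |x| < 1 := abs_lt.mpr ⟨by linarith [hx.1], by linarith [hx.2]⟩
    have hy1 : |y| ≤ 1 := abs_le.mpr ⟨by linarith [hy.1], by linarith [hy.2]⟩
    have : |x * y| < 1 := by
      rw [abs_mul]
      nlinarith [abs_nonneg x, abs_nonneg y]
    rw [hxy] at this
    norm_num at this
  · rw [theta, ← hinv]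
    field_simp

lemma fq_preimage_eq {q : ℕ} (hq : 2 < q) {x : ℝ} (hx : x ∈ Ioo (-lam q / 2) (lam q / 2)) :
    {y : ℝ | y ∈ Icc (-lam q / 2) (lam q / 2) ∧ y ≠ 0 ∧ fq q y = x} =
      {y : ℝ | ∃ n : ℤ, (n ≠ 0 ∧ theta q n x ∈ Icc (-lam q / 2) (lam q / 2)) ∧
        y = theta q n x} := by
  ext y
  constructor
  · rintro ⟨hyI, hy0, hfy⟩
    obtain ⟨n, hn, rfl⟩ := exists_eq_theta_of_fq_eq hx hyI hy0 hfy
    exact ⟨n, ⟨hn, hyI⟩, rfl⟩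
  · rintro ⟨n, ⟨hn, hI⟩, rfl⟩
    exact ⟨hI, theta_ne_zero hq hx hn, fq_theta hq hx hn⟩

/-- for even `q = 2h+2` with `h ≥ 1`, with
`φ_i = θ_1^{∘(h-i)}(0)` and `θ_n(x) = -1/(x + nλ_q)`, for `1 ≤ i ≤ h` and
`x ∈ (φ_{i-1}, φ_i)`:
(a) `θ_n(x) ∈ (φ_{h-1}, 0)` for `n ≥ 2`;
(b) `θ_n(x) ∈ (0, -φ_{h-1})` for `n ≤ -1`;
(c) if `i ≥ 2` then `θ_1(x) ∈ (φ_{i-2}, φ_{i-1})`;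
(d) if `i = 1` then `θ_1(x) < -λ_q/2`, so `θ_1(x) ∉ I_q`;
(e) the `f_q`-preimage set of `x` in `I_q ∖ {0}` equals `{θ_n(x) : n ≠ 0}` if
`i ≥ 2`, and `{θ_n(x) : n ≥ 2 or n ≤ -1}` if `i = 1`. -/
theorem stmt12 (h q : ℕ) (hh : 1 ≤ h) (hq : q = 2 * h + 2) :
    let th : ℤ → ℝ → ℝ := fun n x => -1 / (x + (n : ℝ) * lam q)
    let φ : ℕ → ℝ := fun i => (fun x : ℝ => -1 / (x + lam q))^[h - i] 0
    ∀ i : ℕ, 1 ≤ i → i ≤ h → ∀ x ∈ Set.Ioo (φ (i - 1)) (φ i),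
      (∀ n : ℤ, 2 ≤ n → th n x ∈ Set.Ioo (φ (h - 1)) 0) ∧
      (∀ n : ℤ, n ≤ -1 → th n x ∈ Set.Ioo 0 (-(φ (h - 1)))) ∧
      (2 ≤ i → th 1 x ∈ Set.Ioo (φ (i - 2)) (φ (i - 1))) ∧
      (i = 1 → th 1 x < -(lam q) / 2 ∧
        th 1 x ∉ Set.Icc (-(lam q) / 2) (lam q / 2)) ∧
      (2 ≤ i →
        {y : ℝ | y ∈ Set.Icc (-(lam q) / 2) (lam q / 2) ∧ y ≠ 0 ∧ fq q y = x} =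
          {y : ℝ | ∃ n : ℤ, n ≠ 0 ∧ y = th n x}) ∧
      (i = 1 →
        {y : ℝ | y ∈ Set.Icc (-(lam q) / 2) (lam q / 2) ∧ y ≠ 0 ∧ fq q y = x} =
          {y : ℝ | ∃ n : ℤ, (2 ≤ n ∨ n ≤ -1) ∧ y = th n x}) := by
  intro th φ i hi1 hih x hx
  have hφ : ∀ j, φ j = phi q h j := fun j => by rw [phi, theta_one_eq]
  have hth : ∀ n y, th n y = theta q n y := fun _ _ => rfl
  simp only [hφ, hth] at hx ⊢
  have hq2 : 2 < q := by omega
  have hxI := Ioo_phi_subset hq _ _ hx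
  have hx' : x ∈ Ioo (-lam q / 2) (lam q / 2) := ⟨hxI.1, by linarith [hxI.2, lam_pos hq2]⟩
  have hd : i = 1 → theta q 1 x < -lam q / 2 := by
    rintro rfl
    exact theta_one_lt_neg_lam_div_two hh hq hx
  have hpre : {y | y ∈ Icc (-lam q / 2) (lam q / 2) ∧ y ≠ 0 ∧ fq q y = x} =
      {y | ∃ n : ℤ, (n ≠ 0 ∧ (n = 1 → 2 ≤ i)) ∧ y = theta q n x} := by
    rw [fq_preimage_eq hq2 hx']
    exact Set.ext fun y => exists_congr fun n => and_congr_left fun _ =>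
      and_congr_right fun hn0 => theta_mem_Icc_iff hh hq hi1 hih hx hn0
  refine ⟨fun n hn => ?_, fun n hn => ?_, fun hi2 => theta_one_mem_Ioo_of_two_le hq hi2 hih hx,
    fun hi => ⟨hd hi, fun hI => (hd hi).not_ge hI.1⟩, fun hi2 => ?_, fun hi => ?_⟩
  · rw [phi_sub_one hh]
    exact theta_mem_Ioo_of_two_le hq2 hxI.1 hn
  · rw [phi_sub_one hh, neg_div, neg_neg]
    exact theta_mem_Ioo_of_le_neg_one hq2 hxI.2 hn
  all_goals
    rw [hpre]
    exact Set.ext fun y => exists_congr fun n => and_congr_left fun _ => by omega
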